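/- arXiv:1505.02533 — 6 statements merged into one kernel-verified Lean document; each statement's English description precedes it below -/
import Mathlib

section
/- Let X be a σ-locally compact Hausdorff space (locally compact and a countable union of compact sets) and Y a complete metric space. If K ⊆ BC(X,Y) (bounded continuous functions with the uniform metric) is pointwise relatively compact, equicontinuous at every point of X, and satisfies the BC-extension condition, then K is relatively compact in BC(X,Y). -/
open BoundedContinuousFunction

/-- Arzelà–Ascoli for σ-locally compact Hausdorff `X`, complete metric `Y`:
sufficiency of (AA1) and (AA2) for relative compactness in `BC(X,Y)`. -/
theorem arzela_ascoli_sigma_locally_compact_sufficient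
    {X Y : Type*} [TopologicalSpace X] [T2Space X] [LocallyCompactSpace X]
    [SigmaCompactSpace X] [MetricSpace Y] [CompleteSpace Y]
    (K : Set (X →ᵇ Y))
    (hptwise : ∀ x : X, IsCompact (closure ((fun f : X →ᵇ Y => f x) '' K)))
    (hequi : ∀ x : X, EquicontinuousAt (fun f : K => ((f : X →ᵇ Y) : X → Y)) x)
    (hext : ∀ ε > (0 : ℝ), ∃ (D : Set X) (δ : ℝ), IsCompact D ∧ 0 < δ ∧
      ∀ f ∈ K, ∀ g ∈ K, (∀ x ∈ D, dist (f x) (g x) ≤ δ) → dist f g ≤ ε) :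
    IsCompact (closure K) := by
  refine TotallyBounded.isCompact_of_isClosed ?_ isClosed_closure
  refine TotallyBounded.closure ?_
  rw [Metric.totallyBounded_iff]
  intro ε hε
  obtain ⟨D, δ, hD, hδ, hDδ⟩ := hext (ε / 2) (by linarith)
  haveI : CompactSpace D := isCompact_iff_compactSpace.1 hD
  -- restriction map to D
  set r : (X →ᵇ Y) → (D →ᵇ Y) := fun f => f.restrict D with hr
  -- the union of pointwise images over D is totally bounded
  have hEtb : TotallyBounded {y : Y | ∃ f ∈ K, ∃ x ∈ D, f x = y} := by
    rw [Metric.totallyBounded_iff]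
    intro η hη
    -- equicontinuity gives a neighborhood basis cover of D
    have hV : ∀ x : X, {y : X | ∀ f : K, dist ((f : X →ᵇ Y) x) ((f : X →ᵇ Y) y) < η / 2} ∈
        nhds x := by
      intro x
      have := Metric.equicontinuousAt_iff_right.1 (hequi x) (η / 2) (by linarith)
      filter_upwards [this] with y hy f
      exact hy f
    obtain ⟨t₀, ht₀D, ht₀⟩ := hD.elim_nhds_subcover
      (fun x => {y : X | ∀ f : K, dist ((f : X →ᵇ Y) x) ((f : X →ᵇ Y) y) < η / 2})
      (fun x _ => hV x)
    -- for each center x in t₀, a finite η/2-net of closure (eval x '' K)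
    have hnet : ∀ x : X, ∃ t : Set Y, t.Finite ∧
        closure ((fun f : X →ᵇ Y => f x) '' K) ⊆ ⋃ y ∈ t, Metric.ball y (η / 2) := by
      intro x
      have := (hptwise x).totallyBounded
      rw [Metric.totallyBounded_iff] at this
      exact this (η / 2) (by linarith)
    choose T hTfin hTcov using hnet
    refine ⟨⋃ x ∈ t₀, T x, t₀.finite_toSet.biUnion fun x _ => hTfin x, ?_⟩
    rintro y ⟨f, hfK, x, hxD, rfl⟩
    obtain ⟨x₀, hx₀, hx⟩ := Set.mem_iUnion₂.1 (ht₀ hxD)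
    have h1 : dist (f x₀) (f x) < η / 2 := hx ⟨f, hfK⟩
    have h2 : f x₀ ∈ closure ((fun g : X →ᵇ Y => g x₀) '' K) :=
      subset_closure ⟨f, hfK, rfl⟩
    obtain ⟨c, hc, hcball⟩ := Set.mem_iUnion₂.1 (hTcov x₀ h2)
    refine Set.mem_iUnion₂.2 ⟨c, Set.mem_iUnion₂.2 ⟨x₀, hx₀, hc⟩, ?_⟩
    have : dist (f x) c ≤ dist (f x) (f x₀) + dist (f x₀) c := dist_triangle _ _ _
    rw [dist_comm] at h1
    simp only [Metric.mem_ball] at hcball ⊢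
    linarith
  -- hence its closure is a compact set containing all values on D
  set s : Set Y := closure {y : Y | ∃ f ∈ K, ∃ x ∈ D, f x = y} with hs
  have hscomp : IsCompact s := TotallyBounded.isCompact_of_isClosed
    hEtb.closure isClosed_closure
  -- Arzelà–Ascoli on D: the restricted family has compact closure
  have hrequi : Equicontinuous ((↑) : (r '' K) → D → Y) := by
    intro z
    rw [Metric.equicontinuousAt_iff_right]
    intro η hη
    have := Metric.equicontinuousAt_iff_right.1 (hequi (z : X)) η hη
    have hcont : ContinuousAt (Subtype.val : D → X) z := continuous_subtype_val.continuousAt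
    filter_upwards [hcont this] with w hw g
    obtain ⟨f, hfK, hfg⟩ := g.2
    rw [← hfg]
    exact hw ⟨f, hfK⟩
  have hAA : IsCompact (closure (r '' K)) := by
    refine arzela_ascoli s hscomp (r '' K) ?_ hrequi
    rintro g x ⟨f, hfK, rfl⟩
    exact subset_closure ⟨f, hfK, x, x.2, rfl⟩
  -- total boundedness of r '' K with centers inside r '' K
  have htb := hAA.totallyBounded.subset subset_closure
  rw [totallyBounded_iff_subset] at htb
  obtain ⟨t, htsub, htfin, htcov⟩ := htb {p : (D →ᵇ Y) × (D →ᵇ Y) | dist p.1 p.2 < δ}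
    (Metric.dist_mem_uniformity hδ)
  -- choose preimages in K
  have hpre : ∀ g : {g : D →ᵇ Y // g ∈ t}, ∃ f : X →ᵇ Y, f ∈ K ∧ r f = g.1 :=
    fun g => htsub g.2
  choose F hF using hpre
  classical
  haveI : Finite {g : D →ᵇ Y // g ∈ t} := htfin.to_subtype
  refine ⟨Set.range F, Set.finite_range _, ?_⟩
  intro f hfK
  have : r f ∈ ⋃ g ∈ t, {h : D →ᵇ Y | (h, g) ∈ {p : (D →ᵇ Y) × (D →ᵇ Y) | dist p.1 p.2 < δ}} :=
    htcov ⟨f, hfK, rfl⟩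
  obtain ⟨g, hgt, hg⟩ := Set.mem_iUnion₂.1 this
  refine Set.mem_iUnion₂.2 ⟨F ⟨g, hgt⟩, ⟨⟨⟨g, hgt⟩, rfl⟩, ?_⟩⟩
  have hdist : ∀ x ∈ D, dist (f x) (F ⟨g, hgt⟩ x) ≤ δ := by
    intro x hxD
    have h1 : dist (r f ⟨x, hxD⟩) (g ⟨x, hxD⟩) ≤ dist (r f) g := dist_coe_le_dist _
    have h2 : dist (r f) g < δ := hg
    have hrg : r (F ⟨g, hgt⟩) = g := (hF ⟨g, hgt⟩).2
    calc dist (f x) (F ⟨g, hgt⟩ x) = dist (r f ⟨x, hxD⟩) (r (F ⟨g, hgt⟩) ⟨x, hxD⟩) := rfl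
      _ = dist (r f ⟨x, hxD⟩) (g ⟨x, hxD⟩) := by rw [hrg]
      _ ≤ dist (r f) g := h1
      _ ≤ δ := le_of_lt h2
  have := hDδ f hfK (F ⟨g, hgt⟩) (hF ⟨g, hgt⟩).1 hdist
  rw [Metric.mem_ball]
  linarith
end

section
/- Let X be a σ-locally compact Hausdorff space and Y a complete metric space. If K ⊆ BC(X,Y) is relatively compact in the uniform topology, then K satisfies the BC-extension condition: for every ε > 0 there exist a compact set D ⊆ X and δ > 0 such that for all f,g ∈ K, sup_{x∈D} d_Y(f(x),g(x)) ≤ δ implies sup_{x∈X} d_Y(f(x),g(x)) ≤ ε. -/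
open BoundedContinuousFunction

/-- If `K ⊆ BC(X,Y)` is relatively compact (uniform topology), `X` σ-locally compact
Hausdorff, `Y` complete metric, then `K` satisfies the BC-extension condition. -/
theorem relatively_compact_implies_BC_extension
    {X Y : Type*} [TopologicalSpace X] [T2Space X] [LocallyCompactSpace X]
    [SigmaCompactSpace X] [MetricSpace Y] [CompleteSpace Y]
    (K : Set (X →ᵇ Y)) (hK : IsCompact (closure K)) :
    ∀ ε > (0 : ℝ), ∃ (D : Set X) (δ : ℝ), IsCompact D ∧ 0 < δ ∧
      ∀ f ∈ K, ∀ g ∈ K, (∀ x ∈ D, dist (f x) (g x) ≤ δ) → dist f g ≤ ε := by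
  classical
  intro ε hε
  have hTB : TotallyBounded K := hK.totallyBounded.subset subset_closure
  obtain ⟨t, ht, hcover⟩ := (Metric.totallyBounded_iff.mp hTB) (ε / 5) (by positivity)
  have key : ∀ a b : X →ᵇ Y, 3 * ε / 5 < dist a b →
      ∃ x, 3 * ε / 5 < dist (a x) (b x) := by
    intro a b h
    by_contra hc
    push_neg at hc
    exact absurd ((BoundedContinuousFunction.dist_le (by positivity)).mpr hc)
      (not_le.mpr h)
  set D : Set X := ⋃ a ∈ t, ⋃ b ∈ t,
    if h : 3 * ε / 5 < dist a b then {(key a b h).choose} else ∅ with hD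
  have hDfin : D.Finite := by
    apply ht.biUnion
    intro a _
    apply ht.biUnion
    intro b _
    split <;> simp
  refine ⟨D, ε / 5, hDfin.isCompact, by positivity, ?_⟩
  intro f hf g hg hfg
  obtain ⟨a, ha, hfa⟩ := Set.mem_iUnion₂.mp (hcover hf)
  obtain ⟨b, hb, hgb⟩ := Set.mem_iUnion₂.mp (hcover hg)
  rw [Metric.mem_ball] at hfa hgb
  have hab : dist a b ≤ 3 * ε / 5 := by
    by_contra h
    push_neg at h
    set x := (key a b h).choose with hx
    have hxspec : 3 * ε / 5 < dist (a x) (b x) := (key a b h).choose_spec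
    have hxD : x ∈ D := by
      rw [hD]
      refine Set.mem_iUnion₂.mpr ⟨a, ha, Set.mem_iUnion₂.mpr ⟨b, hb, ?_⟩⟩
      rw [dif_pos h]
      rfl
    have h1 : dist (a x) (f x) ≤ dist a f := dist_coe_le_dist x
    have h2 : dist (g x) (b x) ≤ dist g b := dist_coe_le_dist x
    have h3 : dist (f x) (g x) ≤ ε / 5 := hfg x hxD
    have : dist (a x) (b x) ≤ dist a f + ε / 5 + dist g b :=
      (dist_triangle4 (a x) (f x) (g x) (b x)).trans (by linarith)
    have e1 : dist a f = dist f a := dist_comm a f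
    have e2 : dist g b = dist b g := dist_comm g b
    linarith
  have h1 : dist f g ≤ dist f a + dist a b + dist b g := dist_triangle4 f a b g
  have e1 : dist a f = dist f a := dist_comm a f
  have e2 : dist g b = dist b g := dist_comm g b
  linarith
end

section
/- Let X be a σ-locally compact Hausdorff space and Y a complete metric space. A set K ⊆ BC(X,Y) is relatively compact in the uniform topology if and only if (1) K is pointwise relatively compact and equicontinuous at every point of X, and (2) K satisfies the BC-extension condition. -/
/-!
Both directions go through total boundedness of `K` in the complete space `X →ᵇ Y`.
If `closure K` is compact, evaluation is jointly continuous on a compact family of functions,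
hence equicontinuous; and the sup distance between any two centres of a finite net of `K` is almost
attained at one point, so finitely many points control the sup distance on `K`.
Conversely, on a compact `D` equicontinuity lets finitely many points control all of `D`, and the
values there range over a compact product, so `K` has finite nets for the sup distance on `D`;
the extension condition turns these into finite nets for the sup distance on `X`.
-/

open BoundedContinuousFunction Set Filter Topology

theorem IsCompact.equicontinuousAt_of_continuous_uncurry {ι X Y : Type*} [TopologicalSpace ι]
    [TopologicalSpace X] [UniformSpace Y] {F : ι → X → Y} {S : Set ι} (hS : IsCompact S)
    (hF : Continuous (Function.uncurry F)) (x₀ : X) :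
    EquicontinuousAt (fun i : S => F i) x₀ := by
  intro U hU
  obtain ⟨V, hV, hVU⟩ := hS.mem_uniformity_of_prod (f := fun x i => F i x) (s := univ)
    (hF.comp continuous_swap).continuousOn (mem_univ x₀) (symm_le_uniformity hU)
  rw [nhdsWithin_univ] at hV
  exact mem_of_superset hV fun x hx i => hVU x hx i i.2

section FiniteNets

variable {ι X Y : Type*} [PseudoMetricSpace Y] {F : ι → X → Y}

theorem exists_finite_net_on_finset (t : Finset X)
    (hpt : ∀ z ∈ t, IsCompact (closure (range fun i => F i z))) {ε : ℝ} (hε : 0 < ε) :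
    ∃ T : Set ι, T.Finite ∧ ∀ i, ∃ j ∈ T, ∀ z ∈ t, dist (F i z) (F j z) < ε := by
  let Φ : ι → t → Y := fun i z => F i z
  have hΦ : TotallyBounded (range Φ) :=
    (isCompact_univ_pi fun z : t => hpt z z.2).totallyBounded.subset <| by
      rintro _ ⟨i, rfl⟩ z -
      exact subset_closure ⟨i, rfl⟩
  obtain ⟨T, -, hTfin, hcover⟩ := (exists_subset_image_finite_and (f := Φ) (s := univ)
    (p := fun N => range Φ ⊆ ⋃ y ∈ N, Metric.ball y ε)).mp <| by
      simpa only [image_univ] using Metric.finite_approx_of_totallyBounded hΦ ε hε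
  refine ⟨T, hTfin, fun i => ?_⟩
  obtain ⟨_, ⟨j, hj, rfl⟩, hij⟩ := mem_iUnion₂.mp (hcover ⟨i, rfl⟩)
  exact ⟨j, hj, fun z hz => (dist_le_pi_dist (Φ i) (Φ j) ⟨z, hz⟩).trans_lt hij⟩

variable [TopologicalSpace X]

theorem IsCompact.exists_finite_equicontinuity_centers {D : Set X} (hD : IsCompact D)
    (heq : ∀ x ∈ D, EquicontinuousAt F x) {ε : ℝ} (hε : 0 < ε) :
    ∃ t : Finset X, (∀ z ∈ t, z ∈ D) ∧
      ∀ x ∈ D, ∃ z ∈ t, ∀ i, dist (F i z) (F i x) < ε :=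
  have hnhds : ∀ z ∈ D, {x | ∀ i, dist (F i z) (F i x) < ε} ∈ 𝓝 z := fun z hz =>
    Metric.equicontinuousAt_iff_right.mp (heq z hz) ε hε
  let ⟨t, htD, hcover⟩ := hD.elim_nhds_subcover _ hnhds
  ⟨t, htD, fun x hx => by simpa using hcover hx⟩

theorem IsCompact.exists_finite_net_of_equicontinuous {D : Set X} (hD : IsCompact D)
    (hpt : ∀ x ∈ D, IsCompact (closure (range fun i => F i x)))
    (heq : ∀ x ∈ D, EquicontinuousAt F x) {δ : ℝ} (hδ : 0 < δ) :
    ∃ T : Set ι, T.Finite ∧ ∀ i, ∃ j ∈ T, ∀ x ∈ D, dist (F i x) (F j x) < δ := by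
  obtain ⟨t, htD, hcenters⟩ :=
    hD.exists_finite_equicontinuity_centers heq (by positivity : 0 < δ / 3)
  obtain ⟨T, hTfin, hnet⟩ :=
    exists_finite_net_on_finset t (fun z hz => hpt z (htD z hz)) (by positivity : 0 < δ / 3)
  refine ⟨T, hTfin, fun i => ?_⟩
  obtain ⟨j, hj, hij⟩ := hnet i
  refine ⟨j, hj, fun x hx => ?_⟩
  obtain ⟨z, hz, hzx⟩ := hcenters x hx
  calc dist (F i x) (F j x)
      ≤ dist (F i z) (F i x) + dist (F i z) (F j z) + dist (F j z) (F j x) := by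
        rw [dist_comm (F i z)]; exact dist_triangle4 _ _ _ _
    _ < δ / 3 + δ / 3 + δ / 3 := add_lt_add (add_lt_add (hzx i) (hij z hz)) (hzx j)
    _ = δ := by ring

end FiniteNets

namespace BoundedContinuousFunction

variable {X Y : Type*} [TopologicalSpace X] [PseudoMetricSpace Y]

theorem exists_dist_le_dist_apply_add [Nonempty X] (f g : X →ᵇ Y) {η : ℝ} (hη : 0 < η) :
    ∃ x, dist f g ≤ dist (f x) (g x) + η := by
  by_contra! h
  have : dist f g ≤ dist f g - η :=
    dist_le_iff_of_nonempty.mpr fun x => by linarith [h x]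
  linarith

theorem exists_finite_dist_le_of_totallyBounded {K : Set (X →ᵇ Y)} (hK : TotallyBounded K)
    {ε : ℝ} (hε : 0 < ε) : ∃ D : Set X, D.Finite ∧ ∃ δ > 0,
      ∀ f ∈ K, ∀ g ∈ K, (∀ x ∈ D, dist (f x) (g x) ≤ δ) → dist f g ≤ ε := by
  cases isEmpty_or_nonempty X
  · exact ⟨∅, finite_empty, 1, one_pos, fun f _ g _ _ => dist_zero_of_empty.trans_le hε.le⟩
  obtain ⟨N, hNfin, hcover⟩ := Metric.totallyBounded_iff.mp hK (ε / 6) (by positivity)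
  choose w hw using fun p : (X →ᵇ Y) × (X →ᵇ Y) =>
    exists_dist_le_dist_apply_add p.1 p.2 (by positivity : 0 < ε / 6)
  refine ⟨w '' N ×ˢ N, (hNfin.prod hNfin).image w, ε / 6, by positivity,
    fun f hf g hg hfg => ?_⟩
  obtain ⟨a, ha, hfa⟩ := mem_iUnion₂.mp (hcover hf)
  obtain ⟨b, hb, hgb⟩ := mem_iUnion₂.mp (hcover hg)
  rw [Metric.mem_ball] at hfa hgb
  set x := w (a, b)
  have hx : dist (f x) (g x) ≤ ε / 6 := hfg x (mem_image_of_mem w (mk_mem_prod ha hb))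
  have hfax : dist (f x) (a x) ≤ dist f a := dist_coe_le_dist x
  have hgbx : dist (g x) (b x) ≤ dist g b := dist_coe_le_dist x
  have hab : dist a b ≤ dist (a x) (b x) + ε / 6 := hw (a, b)
  have habx : dist (a x) (b x) ≤ dist (f x) (a x) + dist (f x) (g x) + dist (g x) (b x) := by
    rw [dist_comm (f x)]; exact dist_triangle4 _ _ _ _
  calc dist f g ≤ dist f a + dist a b + dist g b := by
        rw [dist_comm g]; exact dist_triangle4 _ _ _ _
    _ ≤ ε := by linarith

end BoundedContinuousFunction

theorem arzela_ascoli_sigma_locally_compact_iff_general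
    {X Y : Type*} [TopologicalSpace X] [MetricSpace Y] [CompleteSpace Y]
    (K : Set (X →ᵇ Y)) :
    IsCompact (closure K) ↔
      ((∀ x : X, IsCompact (closure ((fun f : X →ᵇ Y => f x) '' K))) ∧
        (∀ x : X, EquicontinuousAt (fun f : K => ((f : X →ᵇ Y) : X → Y)) x)) ∧
      (∀ ε > (0 : ℝ), ∃ (D : Set X) (δ : ℝ), IsCompact D ∧ 0 < δ ∧
        ∀ f ∈ K, ∀ g ∈ K, (∀ x ∈ D, dist (f x) (g x) ≤ δ) → dist f g ≤ ε) := by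
  constructor
  · intro hK
    refine ⟨⟨fun x => ?_, fun x => ?_⟩, fun ε hε => ?_⟩
    · exact (hK.image (continuous_eval_const x)).closure_of_subset (image_mono subset_closure)
    · exact (hK.equicontinuousAt_of_continuous_uncurry (F := fun f : X →ᵇ Y => (f : X → Y))
        continuous_eval x).comp (inclusion subset_closure)
    · obtain ⟨D, hDfin, δ, hδ, hext⟩ :=
        exists_finite_dist_le_of_totallyBounded (hK.totallyBounded.subset subset_closure) hε
      exact ⟨D, δ, hDfin.isCompact, hδ, hext⟩
  · rintro ⟨⟨hpt, heq⟩, hext⟩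
    refine TotallyBounded.isCompact_of_isClosed (TotallyBounded.closure ?_) isClosed_closure
    refine Metric.totallyBounded_iff.mpr fun ε hε => ?_
    obtain ⟨D, δ, hD, hδ, hDδ⟩ := hext (ε / 2) (by positivity)
    simp only [image_eq_range] at hpt
    obtain ⟨T, hTfin, hnet⟩ :=
      hD.exists_finite_net_of_equicontinuous (fun x _ => hpt x) (fun x _ => heq x) hδ
    refine ⟨Subtype.val '' T, hTfin.image _, fun f hf => mem_iUnion₂.mpr ?_⟩
    obtain ⟨g, hgT, hfg⟩ := hnet ⟨f, hf⟩
    exact ⟨g, mem_image_of_mem _ hgT,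
      (hDδ f hf g g.2 fun x hx => (hfg x hx).le).trans_lt (half_lt_self hε)⟩

/-- Arzelà–Ascoli for σ-locally compact Hausdorff `X` and complete metric `Y`:
`K ⊆ BC(X,Y)` is relatively compact iff it is pointwise relatively compact,
equicontinuous at every point, and satisfies the BC-extension condition. -/
theorem arzela_ascoli_sigma_locally_compact_iff
    {X Y : Type*} [TopologicalSpace X] [T2Space X] [LocallyCompactSpace X]
    [SigmaCompactSpace X] [MetricSpace Y] [CompleteSpace Y]
    (K : Set (X →ᵇ Y)) :
    IsCompact (closure K) ↔
      ((∀ x : X, IsCompact (closure ((fun f : X →ᵇ Y => f x) '' K))) ∧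
        (∀ x : X, EquicontinuousAt (fun f : K => ((f : X →ᵇ Y) : X → Y)) x)) ∧
      (∀ ε > (0 : ℝ), ∃ (D : Set X) (δ : ℝ), IsCompact D ∧ 0 < δ ∧
        ∀ f ∈ K, ∀ g ∈ K, (∀ x ∈ D, dist (f x) (g x) ≤ δ) → dist f g ≤ ε) :=
  arzela_ascoli_sigma_locally_compact_iff_general K
end

section
/- Let X, E be finite-dimensional Banach spaces, (Y,Σ,μ) a measure space, and K : X × Y → B(E) satisfy (Car1)–(Car4) and (K1). Then the Fredholm operator T : L^∞(Y,E) → BC(X,E), (Tf)(x) = ∫_Y K(x,y) f(y) dμ(y), is a compact linear operator. -/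
/-!
Let `κ : X → L¹(Y, B(E))`, `x ↦ K(x, ·)`. For `f` in the unit ball of `L^∞`,
`‖Tf(x) - Tf(x')‖ ≤ ‖κ x - κ x'‖₁` and `‖Tf(x)‖ ≤ ‖κ x‖₁`. By dominated convergence `κ` is
continuous, so it maps balls of the finite-dimensional `X` to compact sets, and (K1) says that
outside a large ball of radius `r` every `κ x` is within `2ε` of `κ` at the point of the sphere of
radius `r` in the direction of `x`; hence `κ` has totally bounded range. A finite `ε`-net of that
range reduces the image of the unit ball to its values at finitely many points, where it is bounded
in the finite-dimensional `E`, and this makes it totally bounded in the sup norm.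
-/

open MeasureTheory BoundedContinuousFunction

open Set Metric Bornology Filter Topology

theorem exists_finite_forall_dist_lt_of_totallyBounded_image {α M : Type*} [PseudoMetricSpace M]
    {f : α → M} {s : Set α} (h : TotallyBounded (f '' s)) {ε : ℝ} (hε : 0 < ε) :
    ∃ t ⊆ s, t.Finite ∧ ∀ x ∈ s, ∃ i ∈ t, dist (f x) (f i) < ε := by
  obtain ⟨t, hts, ht, hcover⟩ := (exists_subset_image_finite_and
    (p := fun t => f '' s ⊆ ⋃ y ∈ t, ball y ε)).1 (finite_approx_of_totallyBounded h ε hε)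
  refine ⟨t, hts, ht, fun x hx => ?_⟩
  simpa using hcover (mem_image_of_mem f hx)

theorem totallyBounded_range_of_uniform_limits_along_rays {X M : Type*} [NormedAddCommGroup X]
    [NormedSpace ℝ X] [FiniteDimensional ℝ X] [PseudoMetricSpace M] {F : X → M}
    (hF : Continuous F)
    (hrays : ∀ ε > 0, ∃ R : ℝ, ∀ v : X, ‖v‖ = 1 → ∃ p, ∀ t ≥ R, dist (F (t • v)) p ≤ ε) :
    TotallyBounded (range F) := by
  refine totallyBounded_iff.2 fun ε hε => ?_
  obtain ⟨R, hR⟩ := hrays (ε / 3) (by positivity)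
  set r := max R 0
  obtain ⟨t, ht, hcover⟩ := totallyBounded_iff.1
    ((isCompact_closedBall (0 : X) r).image hF).totallyBounded (ε / 3) (by positivity)
  have hnear : ∀ x, ∃ x' ∈ closedBall (0 : X) r, dist (F x) (F x') ≤ 2 * (ε / 3) := by
    intro x
    by_cases hx : ‖x‖ ≤ r
    · exact ⟨x, mem_closedBall_zero_iff.2 hx, by rw [dist_self]; positivity⟩
    have hr : 0 ≤ r := le_max_right R 0
    have hx0 : x ≠ 0 := fun h => hx (by simpa [h] using hr)
    have hv : ‖‖x‖⁻¹ • x‖ = 1 := norm_smul_inv_norm (𝕜 := ℝ) hx0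
    obtain ⟨p, hp⟩ := hR (‖x‖⁻¹ • x) hv
    refine ⟨r • ‖x‖⁻¹ • x, ?_, ?_⟩
    · rw [mem_closedBall_zero_iff, norm_smul, hv, mul_one, Real.norm_of_nonneg hr]
    have hxv : ‖x‖ • ‖x‖⁻¹ • x = x := by
      rw [smul_smul, mul_inv_cancel₀ (norm_ne_zero_iff.2 hx0), one_smul]
    calc dist (F x) (F (r • ‖x‖⁻¹ • x))
        ≤ dist (F x) p + dist p (F (r • ‖x‖⁻¹ • x)) := dist_triangle _ _ _
      _ ≤ ε / 3 + ε / 3 := by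
          gcongr
          · simpa only [hxv] using hp ‖x‖ ((le_max_left R 0).trans (not_le.1 hx).le)
          · rw [dist_comm]; exact hp r (le_max_left R 0)
      _ = 2 * (ε / 3) := by ring
  refine ⟨t, ht, ?_⟩
  rintro _ ⟨x, rfl⟩
  obtain ⟨x', hx', hxx'⟩ := hnear x
  obtain ⟨y, hy, hy'⟩ := mem_iUnion₂.1 (hcover (mem_image_of_mem F hx'))
  refine mem_iUnion₂.2 ⟨y, hy, mem_ball.2 ?_⟩
  calc dist (F x) y ≤ dist (F x) (F x') + dist (F x') y := dist_triangle _ _ _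
    _ < 2 * (ε / 3) + ε / 3 := add_lt_add_of_le_of_lt hxx' (mem_ball.1 hy')
    _ = ε := by ring

theorem BoundedContinuousFunction.totallyBounded_of_dist_le_dist {X M E : Type*}
    [TopologicalSpace X] [PseudoMetricSpace M] [PseudoMetricSpace E] [ProperSpace E]
    {S : Set (X →ᵇ E)} {F : X → M} (hF : TotallyBounded (range F))
    (hbdd : ∀ x, IsBounded ((fun g : X →ᵇ E => g x) '' S))
    (hdist : ∀ g ∈ S, ∀ x x', dist (g x) (g x') ≤ dist (F x) (F x')) :
    TotallyBounded S := by
  refine totallyBounded_iff.2 fun ε hε => ?_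
  obtain ⟨t, -, ht, hFt⟩ := exists_finite_forall_dist_lt_of_totallyBounded_image
    (s := univ) (by rwa [image_univ]) (by positivity : 0 < ε / 4)
  have := ht.fintype
  let sample : (X →ᵇ E) → (t → E) := fun g i => g i
  have hsample : TotallyBounded (sample '' S) := by
    have : IsBounded (sample '' S) := forall_isBounded_image_eval_iff.1 fun i => by
      simpa only [image_image] using hbdd i
    exact this.isCompact_closure.totallyBounded.subset subset_closure
  obtain ⟨u, huS, hu, hsu⟩ := exists_finite_forall_dist_lt_of_totallyBounded_image hsample
    (by positivity : 0 < ε / 4)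
  refine ⟨u, hu, fun g hg => ?_⟩
  obtain ⟨g', hg'u, hgg'⟩ := hsu g hg
  refine mem_iUnion₂.2 ⟨g', hg'u, mem_ball.2 ?_⟩
  refine ((dist_le (by positivity)).2 fun x => ?_).trans_lt (by linarith : 3 * (ε / 4) < ε)
  obtain ⟨i, hit, hxi⟩ := hFt x trivial
  calc dist (g x) (g' x) ≤ dist (g x) (g i) + dist (g i) (g' i) + dist (g' i) (g' x) :=
        dist_triangle4 _ _ _ _
    _ ≤ ε / 4 + ε / 4 + ε / 4 := by
        gcongr
        · exact (hdist g hg x i).trans hxi.le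
        · exact (dist_le_pi_dist (sample g) (sample g') ⟨i, hit⟩).trans hgg'.le
        · rw [dist_comm]; exact (hdist g' (huS hg'u) x i).trans hxi.le
    _ = 3 * (ε / 4) := by ring

namespace MeasureTheory

variable {Y E F : Type*} [MeasurableSpace Y] {μ : Measure Y} [NormedAddCommGroup E]
  [NormedAddCommGroup F]

theorem ae_norm_le_one_of_eLpNorm_top_le_one {f : Y → E} (hf : eLpNorm f ⊤ μ ≤ 1) :
    ∀ᵐ y ∂μ, ‖f y‖ ≤ 1 := by
  filter_upwards [ae_le_eLpNormEssSup (f := f) (μ := μ)] with y hy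
  rw [← eLpNorm_exponent_top] at hy
  simpa [← ofReal_norm, ENNReal.ofReal_le_one] using hy.trans hf

theorem Integrable.dist_toL1_eq_integral_norm_sub {A B : Y → F} (hA : Integrable A μ)
    (hB : Integrable B μ) : dist (hA.toL1 A) (hB.toL1 B) = ∫ y, ‖A y - B y‖ ∂μ := by
  rw [dist_edist, Integrable.edist_toL1_toL1,
    integral_norm_eq_lintegral_enorm (f := fun y => A y - B y) (hA.sub hB).aestronglyMeasurable]
  simp only [edist_eq_enorm_sub]

theorem continuous_toL1_of_dominated {X : Type*} [TopologicalSpace X] [FirstCountableTopology X]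
    {K : X → Y → F} (hK : ∀ x, Integrable (K x) μ) (hcont : ∀ᵐ y ∂μ, Continuous fun x => K x y)
    (hdom : ∀ x, ∃ U ∈ 𝓝 x, ∃ D : Y → ℝ, Integrable D μ ∧ ∀ z ∈ U, ∀ᵐ y ∂μ, ‖K z y‖ ≤ D y) :
    Continuous fun x => (hK x).toL1 (K x) := by
  refine continuous_iff_continuousAt.2 fun x₀ => tendsto_iff_dist_tendsto_zero.2 ?_
  simp only [Integrable.dist_toL1_eq_integral_norm_sub]
  obtain ⟨U, hU, D, hD, hDU⟩ := hdom x₀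
  have := tendsto_integral_filter_of_dominated_convergence (fun y => D y + ‖K x₀ y‖)
    (.of_forall fun x => ((hK x).sub (hK x₀)).norm.aestronglyMeasurable)
    (eventually_of_mem hU fun x hx => (hDU x hx).mono fun y hy => by
      rw [norm_norm]; exact (norm_sub_le _ _).trans (by gcongr))
    (hD.add (hK x₀).norm)
    (hcont.mono fun y hy => by simpa using ((hy.sub continuous_const).norm.tendsto x₀))
  simpa using this

variable [NormedSpace ℝ E] [NormedSpace ℝ F]

theorem Integrable.clm_apply_of_memLp_top {A : Y → E →L[ℝ] F} {f : Y → E}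
    (hA : Integrable A μ) (hf : MemLp f ⊤ μ) : Integrable (fun y => A y (f y)) μ :=
  memLp_one_iff_integrable.1 <| (ContinuousLinearMap.id ℝ (E →L[ℝ] F)).memLp_of_bilin 1
    (memLp_one_iff_integrable.2 hA) hf

theorem integral_clm_apply_smul_add_smul {A : Y → E →L[ℝ] F} {f g : Y → E}
    (hA : Integrable A μ) (hf : MemLp f ⊤ μ) (hg : MemLp g ⊤ μ) (a b : ℝ) :
    ∫ y, A y (a • f y + b • g y) ∂μ = a • ∫ y, A y (f y) ∂μ + b • ∫ y, A y (g y) ∂μ := by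
  simp only [map_add, map_smul]
  rw [integral_add ((hA.clm_apply_of_memLp_top hf).fun_smul a)
    ((hA.clm_apply_of_memLp_top hg).fun_smul b), integral_smul, integral_smul]

theorem norm_integral_clm_apply_le {A : Y → E →L[ℝ] F} {f : Y → E} (hA : Integrable A μ)
    (hf : ∀ᵐ y ∂μ, ‖f y‖ ≤ 1) : ‖∫ y, A y (f y) ∂μ‖ ≤ ∫ y, ‖A y‖ ∂μ :=
  norm_integral_le_of_norm_le hA.norm <| hf.mono fun y hy =>
    (A y).le_of_opNorm_le_of_le le_rfl hy |>.trans_eq (mul_one _)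

theorem norm_integral_clm_apply_sub_le {A B : Y → E →L[ℝ] F} {f : Y → E} (hA : Integrable A μ)
    (hB : Integrable B μ) (hf : MemLp f ⊤ μ) (hf1 : eLpNorm f ⊤ μ ≤ 1) :
    ‖∫ y, A y (f y) ∂μ - ∫ y, B y (f y) ∂μ‖ ≤ ∫ y, ‖A y - B y‖ ∂μ := by
  rw [← integral_sub (hA.clm_apply_of_memLp_top hf) (hB.clm_apply_of_memLp_top hf)]
  exact norm_integral_clm_apply_le (hA.sub hB) (ae_norm_le_one_of_eLpNorm_top_le_one hf1)

end MeasureTheory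

theorem fredholm_operator_compact_general
    {X E Y : Type*} [NormedAddCommGroup X] [NormedSpace ℝ X] [FiniteDimensional ℝ X]
    [NormedAddCommGroup E] [NormedSpace ℝ E] [FiniteDimensional ℝ E]
    [MeasurableSpace Y] (μ : Measure Y)
    (K : X → Y → E →L[ℝ] E)
    (hCar1 : ∀ x : X, StronglyMeasurable (K x))
    (hCar2 : ∀ᵐ y ∂μ, Continuous fun x : X => K x y)
    (hCar3 : ∀ x : X, ∃ U ∈ nhds x, ∃ D : Y → ℝ, Integrable D μ ∧
      ∀ z ∈ U, ∀ᵐ y ∂μ, ‖K z y‖ ≤ D y)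
    (hK1 : ∀ ε > (0 : ℝ), ∃ Tsup : ℝ, ∀ v : X, ‖v‖ = 1 →
      ∃ Tv : ℝ, 0 < Tv ∧ Tv ≤ Tsup ∧ ∃ L : Y → E →L[ℝ] E, Integrable L μ ∧
        ∀ t : ℝ, Tv ≤ t → ∫ y, ‖K (t • v) y - L y‖ ∂μ ≤ ε) :
    -- linearity
    (∀ (a b : ℝ) (f g : Y → E), MemLp f ⊤ μ → MemLp g ⊤ μ →
      (fun x : X => ∫ y, K x y (a • f y + b • g y) ∂μ) =
        fun x : X => a • ∫ y, K x y (f y) ∂μ + b • ∫ y, K x y (g y) ∂μ) ∧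
    -- compactness: image of the unit ball of L^∞ is relatively compact in BC(X,E)
    IsCompact (closure {g : X →ᵇ E | ∃ f : Y → E, MemLp f ⊤ μ ∧
      eLpNorm f ⊤ μ ≤ 1 ∧ ∀ x : X, g x = ∫ y, K x y (f y) ∂μ}) := by
  have hK (x : X) : Integrable (K x) μ := by
    obtain ⟨U, hU, D, hD, hDU⟩ := hCar3 x
    exact hD.mono' (hCar1 x).aestronglyMeasurable (hDU x (mem_of_mem_nhds hU))
  set κ : X → Y →₁[μ] (E →L[ℝ] E) := fun x => (hK x).toL1 (K x)
  have hκ : TotallyBounded (range κ) := by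
    refine totallyBounded_range_of_uniform_limits_along_rays
      (continuous_toL1_of_dominated hK hCar2 hCar3) fun ε hε => ?_
    obtain ⟨R, hR⟩ := hK1 ε hε
    refine ⟨R, fun v hv => ?_⟩
    obtain ⟨Tv, -, hTvR, L, hL, hKL⟩ := hR v hv
    exact ⟨hL.toL1 L, fun t ht => (Integrable.dist_toL1_eq_integral_norm_sub _ _).trans_le
      (hKL t (hTvR.trans ht))⟩
  refine ⟨fun a b f g hf hg => funext fun x =>
    integral_clm_apply_smul_add_smul (hK x) hf hg a b, ?_⟩
  refine TotallyBounded.isCompact_of_isClosed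
    (totallyBounded_of_dist_le_dist hκ (fun x => ?_) ?_).closure isClosed_closure
  · refine (isBounded_closedBall (x := (0 : E)) (r := ∫ y, ‖K x y‖ ∂μ)).subset ?_
    rintro _ ⟨g, ⟨f, -, hf1, hgf⟩, rfl⟩
    simpa only [mem_closedBall_zero_iff, hgf] using
      norm_integral_clm_apply_le (hK x) (ae_norm_le_one_of_eLpNorm_top_le_one hf1)
  · rintro g ⟨f, hf, hf1, hgf⟩ x x'
    rw [dist_eq_norm, hgf, hgf, Integrable.dist_toL1_eq_integral_norm_sub]
    exact norm_integral_clm_apply_sub_le (hK x) (hK x') hf hf1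

/-- Under (Car1)–(Car4) and (K1), the Fredholm operator
`(Tf)(x) = ∫ K x y (f y) dμ` from `L^∞(Y,E)` to `BC(X,E)` is linear and compact:
it is additive/homogeneous, and the image of the unit ball of `L^∞` is relatively
compact in `BC(X,E)`. -/
theorem fredholm_operator_compact
    {X E Y : Type*} [NormedAddCommGroup X] [NormedSpace ℝ X] [FiniteDimensional ℝ X]
    [NormedAddCommGroup E] [NormedSpace ℝ E] [FiniteDimensional ℝ E]
    [MeasurableSpace Y] (μ : Measure Y)
    (K : X → Y → E →L[ℝ] E)
    (hCar1 : ∀ x : X, StronglyMeasurable (K x))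
    (hCar2 : ∀ᵐ y ∂μ, Continuous fun x : X => K x y)
    (hCar3 : ∀ x : X, ∃ U ∈ nhds x, ∃ D : Y → ℝ, Integrable D μ ∧
      ∀ z ∈ U, ∀ᵐ y ∂μ, ‖K z y‖ ≤ D y)
    (hCar4 : ∃ C : ℝ, ∀ x : X, ∫ y, ‖K x y‖ ∂μ ≤ C)
    (hK1 : ∀ ε > (0 : ℝ), ∃ Tsup : ℝ, ∀ v : X, ‖v‖ = 1 →
      ∃ Tv : ℝ, 0 < Tv ∧ Tv ≤ Tsup ∧ ∃ L : Y → E →L[ℝ] E, Integrable L μ ∧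
        ∀ t : ℝ, Tv ≤ t → ∫ y, ‖K (t • v) y - L y‖ ∂μ ≤ ε) :
    -- linearity
    (∀ (a b : ℝ) (f g : Y → E), MemLp f ⊤ μ → MemLp g ⊤ μ →
      (fun x : X => ∫ y, K x y (a • f y + b • g y) ∂μ) =
        fun x : X => a • ∫ y, K x y (f y) ∂μ + b • ∫ y, K x y (g y) ∂μ) ∧
    -- compactness: image of the unit ball of L^∞ is relatively compact in BC(X,E)
    IsCompact (closure {g : X →ᵇ E | ∃ f : Y → E, MemLp f ⊤ μ ∧
      eLpNorm f ⊤ μ ≤ 1 ∧ ∀ x : X, g x = ∫ y, K x y (f y) ∂μ}) :=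
  fredholm_operator_compact_general μ K hCar1 hCar2 hCar3 hK1
end

section
/- Let K satisfy (Car1)–(Car4) and (K2), and let ε > 0. Choose T > 0 such that ∫_Y ‖K(tv,y) − K(sv,y)‖ dμ(y) ≤ ε/4 for all unit vectors v and all t,s ≥ T. Then for every h ∈ L^∞(Y,E) with ‖h‖_∞ ≤ 2: sup_{‖x‖>T} ‖∫_Y K(x,y)h(y) dμ(y)‖ ≤ ε/2 + sup_{‖x‖≤T} ‖∫_Y K(x,y)h(y) dμ(y)‖. Consequently, if sup_{‖x‖≤T} ‖∫_Y K(x,y)h(y)dμ(y)‖ ≤ ε/4, then sup_{x∈X} ‖∫_Y K(x,y)h(y)dμ(y)‖ ≤ ε. -/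
open MeasureTheory

/-- The key estimate for the BC-extension condition of the Fredholm image: under
(Car1)–(Car4), if `∫ ‖K (t•v) y − K (s•v) y‖ dμ ≤ ε/4` for all unit `v` and `t,s ≥ T`,
then for `‖h‖_∞ ≤ 2` the value of `‖∫ K x y (h y) dμ‖` for `‖x‖ > T` is controlled by
`ε/2` plus its supremum over `‖x‖ ≤ T`; consequently if the latter is `≤ ε/4`, the
supremum over all `x` is `≤ ε`. -/
theorem fredholm_extension_key_estimate
    {X E Y : Type*} [NormedAddCommGroup X] [NormedSpace ℝ X] [FiniteDimensional ℝ X]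
    [NormedAddCommGroup E] [NormedSpace ℝ E] [FiniteDimensional ℝ E]
    [MeasurableSpace Y] (μ : Measure Y)
    (K : X → Y → E →L[ℝ] E)
    (hCar1 : ∀ x : X, StronglyMeasurable (K x))
    (hCar2 : ∀ᵐ y ∂μ, Continuous fun x : X => K x y)
    (hCar3 : ∀ x : X, ∃ U ∈ nhds x, ∃ D : Y → ℝ, Integrable D μ ∧
      ∀ z ∈ U, ∀ᵐ y ∂μ, ‖K z y‖ ≤ D y)
    (hCar4 : ∃ C : ℝ, ∀ x : X, ∫ y, ‖K x y‖ ∂μ ≤ C)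
    (ε : ℝ) (hε : 0 < ε) (T : ℝ) (hT : 0 < T)
    (hK2T : ∀ v : X, ‖v‖ = 1 → ∀ t : ℝ, T ≤ t → ∀ s : ℝ, T ≤ s →
      ∫ y, ‖K (t • v) y - K (s • v) y‖ ∂μ ≤ ε / 4)
    (h : Y → E) (hmeas : AEStronglyMeasurable h μ)
    (hbd : ∀ᵐ y ∂μ, ‖h y‖ ≤ 2) :
    (∀ B : ℝ, (∀ z : X, ‖z‖ ≤ T → ‖∫ y, K z y (h y) ∂μ‖ ≤ B) →
      ∀ x : X, T < ‖x‖ → ‖∫ y, K x y (h y) ∂μ‖ ≤ ε / 2 + B) ∧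
    ((∀ z : X, ‖z‖ ≤ T → ‖∫ y, K z y (h y) ∂μ‖ ≤ ε / 4) →
      ∀ x : X, ‖∫ y, K x y (h y) ∂μ‖ ≤ ε) := by
  -- Integrability of `y ↦ ‖K x y‖` for each `x`.
  have hIntNorm : ∀ x : X, Integrable (fun y => ‖K x y‖) μ := by
    intro x
    obtain ⟨U, hU, D, hD, hDom⟩ := hCar3 x
    exact (hD.mono' (hCar1 x).norm.aestronglyMeasurable
      ((hDom x (mem_of_mem_nhds hU)).mono fun y hy => by
        simpa [Real.norm_eq_abs, abs_of_nonneg (norm_nonneg _)] using hy))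
  -- Measurability of `y ↦ K x y (h y)`.
  have hMeasApp : ∀ x : X, AEStronglyMeasurable (fun y => K x y (h y)) μ := fun x =>
    isBoundedBilinearMap_apply.continuous.comp_aestronglyMeasurable
      ((hCar1 x).aestronglyMeasurable.prodMk hmeas)
  -- Integrability of `y ↦ K x y (h y)`.
  have hIntApp : ∀ x : X, Integrable (fun y => K x y (h y)) μ := by
    intro x
    refine ((hIntNorm x).const_mul 2).mono' (hMeasApp x) ?_
    filter_upwards [hbd] with y hy
    calc ‖K x y (h y)‖ ≤ ‖K x y‖ * ‖h y‖ := (K x y).le_opNorm _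
      _ ≤ ‖K x y‖ * 2 := by nlinarith [norm_nonneg (K x y)]
      _ = 2 * ‖K x y‖ := by ring
  -- Main estimate.
  have main : ∀ B : ℝ, (∀ z : X, ‖z‖ ≤ T → ‖∫ y, K z y (h y) ∂μ‖ ≤ B) →
      ∀ x : X, T < ‖x‖ → ‖∫ y, K x y (h y) ∂μ‖ ≤ ε / 2 + B := by
    intro B hB x hx
    have hxne : ‖x‖ ≠ 0 := ne_of_gt (hT.trans hx)
    set v : X := ‖x‖⁻¹ • x with hv
    have hvnorm : ‖v‖ = 1 := by
      rw [hv, norm_smul, norm_inv, norm_norm, inv_mul_cancel₀ hxne]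
    have hxv : ‖x‖ • v = x := by
      rw [hv, smul_smul, mul_inv_cancel₀ hxne, one_smul]
    set z : X := T • v with hz
    have hznorm : ‖z‖ = T := by
      rw [hz, norm_smul, hvnorm, Real.norm_eq_abs, abs_of_pos hT, mul_one]
    -- norm of the difference of integrals
    have hdiffInt : Integrable (fun y => ‖K x y - K z y‖) μ := by
      refine ((hIntNorm x).add (hIntNorm z)).mono'
        (((hCar1 x).sub (hCar1 z)).norm.aestronglyMeasurable) ?_
      filter_upwards with y
      simpa [Real.norm_eq_abs, abs_of_nonneg (norm_nonneg _)] using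
        norm_sub_le (K x y) (K z y)
    have hk2 : ∫ y, ‖K x y - K z y‖ ∂μ ≤ ε / 4 := by
      have := hK2T v hvnorm ‖x‖ hx.le T le_rfl
      rwa [hxv] at this
    have hdiff : ‖(∫ y, K x y (h y) ∂μ) - ∫ y, K z y (h y) ∂μ‖ ≤ ε / 2 := by
      rw [← integral_sub (hIntApp x) (hIntApp z)]
      calc ‖∫ y, (K x y (h y) - K z y (h y)) ∂μ‖
          ≤ ∫ y, ‖K x y (h y) - K z y (h y)‖ ∂μ := norm_integral_le_integral_norm _
        _ ≤ ∫ y, 2 * ‖K x y - K z y‖ ∂μ := by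
            refine integral_mono_ae ((hIntApp x).sub (hIntApp z)).norm
              (hdiffInt.const_mul 2) ?_
            filter_upwards [hbd] with y hy
            calc ‖K x y (h y) - K z y (h y)‖ = ‖(K x y - K z y) (h y)‖ := by simp
              _ ≤ ‖K x y - K z y‖ * ‖h y‖ := (K x y - K z y).le_opNorm _
              _ ≤ 2 * ‖K x y - K z y‖ := by nlinarith [norm_nonneg (K x y - K z y)]
        _ = 2 * ∫ y, ‖K x y - K z y‖ ∂μ := integral_const_mul _ _
        _ ≤ 2 * (ε / 4) := by linarith
        _ = ε / 2 := by ring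
    calc ‖∫ y, K x y (h y) ∂μ‖
        ≤ ‖(∫ y, K x y (h y) ∂μ) - ∫ y, K z y (h y) ∂μ‖ + ‖∫ y, K z y (h y) ∂μ‖ := by
          simpa using norm_add_le ((∫ y, K x y (h y) ∂μ) - ∫ y, K z y (h y) ∂μ)
            (∫ y, K z y (h y) ∂μ)
      _ ≤ ε / 2 + B := add_le_add hdiff (hB z hznorm.le)
  refine ⟨main, fun hsmall x => ?_⟩
  rcases le_or_gt ‖x‖ T with hle | hgt
  · linarith [hsmall x hle]
  · linarith [main (ε / 4) hsmall x hgt]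
end

section
/- Let F : Y × E → E satisfy (F1)–(F3). Then the Nemytskii operator N : L^∞(Y,E) → L^∞(Y,E), (Nf)(y) = F(y, f(y)), is well defined, continuous, and maps bounded sets to bounded sets (with ‖Nf‖_∞ ≤ φ(‖f‖_∞)). -/
/-!
By compactness of closed balls in finite dimension, (F2) upgrades, via a finite subcover and a
Lebesgue number, to a modulus of continuity that is uniform over `‖z‖ ≤ R` and valid off a single
null set. This modulus is exactly the continuity of `N` in `L^∞`; it also makes almost every
`F y` continuous on each ball, so `y ↦ F y (f y)` is the a.e. limit of the strongly measurable maps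
`y ↦ F y (sₙ y)` along simple approximations `sₙ → f`. The bound is (F3) combined with the
monotonicity of `φ`.
-/

open MeasureTheory Filter Topology Metric TopologicalSpace Set

section Caratheodory

variable {Y E G : Type*} [MeasurableSpace Y]

lemma stronglyMeasurable_comp_simpleFunc [TopologicalSpace G] [AddCommMonoid G] [ContinuousAdd G]
    {F : Y → E → G} (hF : ∀ z, StronglyMeasurable fun y => F y z) (s : SimpleFunc Y E) :
    StronglyMeasurable fun y => F y (s y) := by
  classical
  have hsum : (fun y => F y (s y)) = ∑ c ∈ s.range, (s ⁻¹' {c}).indicator (fun y => F y c) := by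
    ext y
    rw [Finset.sum_apply, Finset.sum_eq_single_of_mem (s y) (s.mem_range_self y)]
    · simp
    · intro c _ hc
      simp [Ne.symm hc]
  rw [hsum]
  exact Finset.stronglyMeasurable_sum _ fun c _ => (hF c).indicator (s.measurableSet_fiber c)

lemma aestronglyMeasurable_comp_of_ae_continuousAt [TopologicalSpace E] [TopologicalSpace G]
    [AddCommMonoid G] [ContinuousAdd G] [PseudoMetrizableSpace G] {μ : Measure Y} {F : Y → E → G}
    (hF : ∀ z, StronglyMeasurable fun y => F y z) {f : Y → E} (hf : AEStronglyMeasurable f μ)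
    (hcont : ∀ᵐ y ∂μ, ContinuousAt (F y) (f y)) :
    AEStronglyMeasurable (fun y => F y (f y)) μ := by
  set g := hf.mk f
  have hg : StronglyMeasurable g := hf.stronglyMeasurable_mk
  have hlim : ∀ᵐ y ∂μ, Tendsto (fun n => F y (hg.approx n y)) atTop (𝓝 (F y (f y))) := by
    filter_upwards [hcont, hf.ae_eq_mk] with y hy hfg
    rw [hfg] at hy ⊢
    exact hy.tendsto.comp (hg.tendsto_approx y)
  exact aestronglyMeasurable_of_tendsto_ae atTop
    (fun n => (stronglyMeasurable_comp_simpleFunc hF (hg.approx n)).aestronglyMeasurable) hlim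

end Caratheodory

section Uniformization

variable {Y E G : Type*} [MeasurableSpace Y] [SeminormedAddCommGroup E] [SeminormedAddCommGroup G]
  {μ : Measure Y} {F : Y → E → G} {K : Set E}

lemma IsCompact.exists_pos_ae_forall_norm_sub_le (hK : IsCompact K)
    (hF : ∀ z, ∀ ε > (0 : ℝ), ∃ δ > (0 : ℝ), ∀ᵐ y ∂μ, ∀ w, ‖w - z‖ ≤ δ → ‖F y w - F y z‖ ≤ ε)
    {ε : ℝ} (hε : 0 < ε) :
    ∃ δ > (0 : ℝ), ∀ᵐ y ∂μ, ∀ z ∈ K, ∀ w, ‖w - z‖ ≤ δ → ‖F y w - F y z‖ ≤ ε := by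
  choose d hd hFd using fun z => hF z (ε / 2) (half_pos hε)
  obtain ⟨t, ht⟩ := hK.elim_finite_subcover (fun z => ball z (d z)) (fun _ => isOpen_ball)
    fun z _ => mem_iUnion.2 ⟨z, mem_ball_self (hd z)⟩
  -- The centres in `t` are finitely many, so their null sets can be discarded simultaneously.
  obtain ⟨δ, hδ, hδK⟩ := lebesgue_number_lemma_of_metric (c := fun z : t => ball (z : E) (d z))
    hK (fun _ => isOpen_ball) (by simpa only [iUnion_subtype] using ht)
  refine ⟨δ / 2, half_pos hδ, ?_⟩
  filter_upwards [ae_all_iff.2 fun z : t => hFd z] with y hy z hz w hw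
  obtain ⟨c, hc⟩ := hδK z hz
  have hz_c : ‖z - c‖ ≤ d c := by
    simpa [dist_eq_norm] using (mem_ball.1 (hc (mem_ball_self hδ))).le
  have hw_c : ‖w - c‖ ≤ d c := by
    have : dist w z < δ := by rw [dist_eq_norm]; linarith
    simpa [dist_eq_norm] using (mem_ball.1 (hc this)).le
  calc ‖F y w - F y z‖ ≤ ‖F y w - F y c‖ + ‖F y c - F y z‖ := norm_sub_le_norm_sub_add_norm_sub ..
    _ ≤ ε / 2 + ε / 2 := add_le_add (hy c w hw_c) (norm_sub_rev (F y z) _ ▸ hy c z hz_c)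
    _ = ε := add_halves ε

lemma ae_forall_continuousAt_of_uniform
    (hF : ∀ ε > (0 : ℝ), ∃ δ > (0 : ℝ), ∀ᵐ y ∂μ, ∀ z ∈ K, ∀ w, ‖w - z‖ ≤ δ → ‖F y w - F y z‖ ≤ ε) :
    ∀ᵐ y ∂μ, ∀ z ∈ K, ContinuousAt (F y) z := by
  choose δ hδ hFδ using fun k : ℕ => hF (1 / (k + 1)) Nat.one_div_pos_of_nat
  filter_upwards [ae_all_iff.2 hFδ] with y hy z hz
  rw [Metric.continuousAt_iff]
  intro ε hε
  obtain ⟨k, hk⟩ := exists_nat_one_div_lt hε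
  refine ⟨δ k, hδ k, fun w hw => ?_⟩
  rw [dist_eq_norm] at hw ⊢
  exact (hy k z hz w hw.le).trans_lt hk

end Uniformization

theorem nemytskii_operator_wellDefined_bounded_continuous_general
    {E Y : Type*} [NormedAddCommGroup E] [NormedSpace ℝ E] [FiniteDimensional ℝ E]
    [MeasurableSpace Y] (μ : Measure Y)
    (F : Y → E → E)
    (hF1 : ∀ z : E, StronglyMeasurable fun y => F y z)
    (hF2 : ∀ z : E, ∀ ε > (0 : ℝ), ∃ δ > (0 : ℝ), ∀ᵐ y ∂μ,
      ∀ w : E, ‖w - z‖ ≤ δ → ‖F y w - F y z‖ ≤ ε)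
    (φ : ℝ → ℝ) (hφmono : Monotone φ)
    (hF3 : ∀ᵐ y ∂μ, ∀ z : E, ‖F y z‖ ≤ φ ‖z‖) :
    -- well defined on L^∞
    (∀ f : Y → E, MemLp f ⊤ μ → MemLp (fun y => F y (f y)) ⊤ μ) ∧
    -- bounded sets to bounded sets, with ‖Nf‖_∞ ≤ φ(‖f‖_∞)
    (∀ f : Y → E, MemLp f ⊤ μ → ∀ M : ℝ, (∀ᵐ y ∂μ, ‖f y‖ ≤ M) →
      ∀ᵐ y ∂μ, ‖F y (f y)‖ ≤ φ M) ∧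
    -- continuity in the L^∞ sense
    (∀ f : Y → E, MemLp f ⊤ μ → ∀ ε > (0 : ℝ), ∃ δ > (0 : ℝ),
      ∀ f' : Y → E, MemLp f' ⊤ μ → (∀ᵐ y ∂μ, ‖f' y - f y‖ ≤ δ) →
        ∀ᵐ y ∂μ, ‖F y (f' y) - F y (f y)‖ ≤ ε) := by
  have hbound (f : Y → E) (M : ℝ) (hM : ∀ᵐ y ∂μ, ‖f y‖ ≤ M) : ∀ᵐ y ∂μ, ‖F y (f y)‖ ≤ φ M := by
    filter_upwards [hF3, hM] with y hFy hfy
    exact (hFy (f y)).trans (hφmono hfy)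
  refine ⟨fun f hf => ?_, fun f _ => hbound f, fun f hf ε hε => ?_⟩
  · set M := lpNorm f ⊤ μ
    have hcont : ∀ᵐ y ∂μ, ContinuousAt (F y) (f y) := by
      filter_upwards [ae_forall_continuousAt_of_uniform fun _ hε =>
        (isCompact_closedBall (0 : E) M).exists_pos_ae_forall_norm_sub_le hF2 hε,
        ae_le_lpNorm_exponent_top hf] with y hy hfy
      exact hy (f y) (mem_closedBall_zero_iff.2 hfy)
    exact memLp_top_of_bound (aestronglyMeasurable_comp_of_ae_continuousAt hF1 hf.1 hcont) (φ M)
      (hbound f M (ae_le_lpNorm_exponent_top hf))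
  · obtain ⟨δ, hδ, hFδ⟩ :=
      (isCompact_closedBall (0 : E) (lpNorm f ⊤ μ)).exists_pos_ae_forall_norm_sub_le hF2 hε
    refine ⟨δ, hδ, fun f' _ hf' => ?_⟩
    filter_upwards [hFδ, ae_le_lpNorm_exponent_top hf, hf'] with y hy hfy hf'y
    exact hy (f y) (mem_closedBall_zero_iff.2 hfy) (f' y) hf'y

/-- Under (F1)–(F3), the Nemytskii operator `(Nf)(y) = F y (f y)` maps `L^∞(Y,E)`
into itself, maps bounded sets to bounded sets (`‖Nf‖_∞ ≤ φ(‖f‖_∞)`), and is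
continuous. -/
theorem nemytskii_operator_wellDefined_bounded_continuous
    {E Y : Type*} [NormedAddCommGroup E] [NormedSpace ℝ E] [FiniteDimensional ℝ E]
    [MeasurableSpace Y] (μ : Measure Y)
    (F : Y → E → E)
    (hF1 : ∀ z : E, StronglyMeasurable fun y => F y z)
    (hF2 : ∀ z : E, ∀ ε > (0 : ℝ), ∃ δ > (0 : ℝ), ∀ᵐ y ∂μ,
      ∀ w : E, ‖w - z‖ ≤ δ → ‖F y w - F y z‖ ≤ ε)
    (φ : ℝ → ℝ) (hφmono : Monotone φ) (hφcont : Continuous φ)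
    (hF3 : ∀ᵐ y ∂μ, ∀ z : E, ‖F y z‖ ≤ φ ‖z‖) :
    -- well defined on L^∞
    (∀ f : Y → E, MemLp f ⊤ μ → MemLp (fun y => F y (f y)) ⊤ μ) ∧
    -- bounded sets to bounded sets, with ‖Nf‖_∞ ≤ φ(‖f‖_∞)
    (∀ f : Y → E, MemLp f ⊤ μ → ∀ M : ℝ, (∀ᵐ y ∂μ, ‖f y‖ ≤ M) →
      ∀ᵐ y ∂μ, ‖F y (f y)‖ ≤ φ M) ∧
    -- continuity in the L^∞ sense
    (∀ f : Y → E, MemLp f ⊤ μ → ∀ ε > (0 : ℝ), ∃ δ > (0 : ℝ),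
      ∀ f' : Y → E, MemLp f' ⊤ μ → (∀ᵐ y ∂μ, ‖f' y - f y‖ ≤ δ) →
        ∀ᵐ y ∂μ, ‖F y (f' y) - F y (f y)‖ ≤ ε) :=
  nemytskii_operator_wellDefined_bounded_continuous_general μ F hF1 hF2 φ hφmono hF3
end
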